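/- Specialize q = 0 and replace t by 1/q where q is now a prime power (or any real > 1). Let λ ⊂ Λ with the new cell added in column i. Then the multiplicity κ(λ,Λ) = (1/t^{Λ'_i − 1}) ∏_{s∈R} (1 − q^{a_Λ+1}t^{l_Λ})/(1 − q^{a_λ+1}t^{l_λ}) ∏_{s∈C} (1 − q^{a_Λ}t^{l_Λ+1})/(1 − q^{a_λ}t^{l_λ+1}) evaluated at these parameters equals q^{λ'_{i+1}} + q^{λ'_{i+1}+1} + ... + q^{λ'_i}; in particular κ(λ,Λ) is a positive integer when q is a positive integer. -/

import Mathlib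

/-!
Write `r = μ.colLen c` and `b = μ.colLen (c + 1)`. At `q = 0` every factor of the row product is
`1 / 1`. Adding the cell `(r, c)` leaves the arms of the cells above it unchanged and lengthens
their legs by one, so a column factor is `1` unless its arm vanishes, i.e. unless its row `i` is
at least `b`; those factors `(1 - t^(r+1-i)) / (1 - t^(r-i))` telescope to `(1 - t^(r+1-b)) / (1 - t)`.
With `t = 1/Q`, multiplying by `t^(-r)` turns this into the geometric sum `Q^b + ⋯ + Q^r`.
-/

/-- Arm length: the number of cells of `μ` strictly east of the cell `s`. -/
def arm (μ : YoungDiagram) (s : ℕ × ℕ) : ℕ := μ.rowLen s.1 - (s.2 + 1)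

/-- Leg length: the number of cells of `μ` strictly south of the cell `s`. -/
def leg (μ : YoungDiagram) (s : ℕ × ℕ) : ℕ := μ.colLen s.2 - (s.1 + 1)

theorem Finset.prod_range_div_of_ne_zero {G : Type*} [CommGroupWithZero G] (f : ℕ → G) (n : ℕ)
    (hf : ∀ i ≤ n, f i ≠ 0) : ∏ i ∈ range n, f i / f (i + 1) = f 0 / f n := by
  induction n with
  | zero => simp [hf 0 le_rfl]
  | succ n ih =>
    rw [prod_range_succ, ih fun i hi => hf i (hi.trans n.le_succ),
      div_mul_div_cancel₀ (hf n n.le_succ)]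

theorem geom_sum_Icc_eq_div_inv_pow {K : Type*} [Field K] {Q : K} (hQ0 : Q ≠ 0) (hQ1 : Q ≠ 1)
    {b r : ℕ} (hbr : b ≤ r) :
    ∑ k ∈ Finset.Icc b r, Q ^ k =
      1 / (1 / Q) ^ r * ((1 - (1 / Q) ^ (r + 1 - b)) / (1 - 1 / Q)) := by
  have hsub : Q - 1 ≠ 0 := sub_ne_zero.mpr hQ1
  rw [← Finset.Ico_add_one_right_eq_Icc, geom_sum_Ico hQ1 (by omega), one_div_pow, one_div_pow,
    one_div_one_div, one_sub_div (pow_ne_zero _ hQ0), one_sub_div hQ0, pow_sub₀ _ hQ0 (by omega)]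
  field_simp
  ring

namespace YoungDiagram

theorem arm_eq_zero_iff (μ : YoungDiagram) (i j : ℕ) : arm μ (i, j) = 0 ↔ μ.colLen (j + 1) ≤ i := by
  rw [arm, Nat.sub_eq_zero_iff_le, ← not_lt, ← not_lt, ← mem_iff_lt_rowLen, ← mem_iff_lt_colLen]

theorem cells_filter_snd_eq (μ : YoungDiagram) (j : ℕ) :
    μ.cells.filter (fun s => s.2 = j) = (Finset.range (μ.colLen j)).image (fun i => (i, j)) := by
  ext ⟨i, j'⟩
  simp only [Finset.mem_filter, mem_cells, Finset.mem_image, Finset.mem_range, Prod.mk.injEq]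
  constructor
  · rintro ⟨hmem, rfl⟩
    exact ⟨i, mem_iff_lt_colLen.mp hmem, rfl, rfl⟩
  · rintro ⟨i, hi, rfl, rfl⟩
    exact ⟨mem_iff_lt_colLen.mpr hi, rfl⟩

theorem rowLen_congr {μ ν : YoungDiagram} {i : ℕ} (h : ∀ j, (i, j) ∈ μ ↔ (i, j) ∈ ν) :
    μ.rowLen i = ν.rowLen i :=
  eq_of_forall_lt_iff fun j => by rw [← mem_iff_lt_rowLen, ← mem_iff_lt_rowLen, h]

theorem colLen_eq_of_forall_mem_iff {μ : YoungDiagram} {j n : ℕ} (h : ∀ i, (i, j) ∈ μ ↔ i < n) :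
    μ.colLen j = n :=
  eq_of_forall_lt_iff fun i => by rw [← mem_iff_lt_colLen, h]

section AddCell

variable {μ Λ : YoungDiagram} {r c : ℕ}

theorem mem_iff_of_cells_eq_insert (hins : Λ.cells = insert (r, c) μ.cells) {p : ℕ × ℕ} :
    p ∈ Λ ↔ p = (r, c) ∨ p ∈ μ := by
  rw [← mem_cells, hins, Finset.mem_insert, mem_cells]

theorem colLen_eq_of_cells_eq_insert (hnot : (r, c) ∉ μ) (hins : Λ.cells = insert (r, c) μ.cells) :
    μ.colLen c = r := by
  refine colLen_eq_of_forall_mem_iff fun i => ⟨fun hi => ?_, fun hi => ?_⟩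
  · by_contra! hri
    exact hnot (μ.up_left_mem hri le_rfl hi)
  · have hΛ : (i, c) ∈ Λ :=
      Λ.up_left_mem hi.le le_rfl ((mem_iff_of_cells_eq_insert hins).mpr (Or.inl rfl))
    rcases (mem_iff_of_cells_eq_insert hins).mp hΛ with h | h
    · exact absurd (congrArg Prod.fst h) hi.ne
    · exact h

theorem colLen_eq_succ_of_cells_eq_insert (hnot : (r, c) ∉ μ)
    (hins : Λ.cells = insert (r, c) μ.cells) : Λ.colLen c = r + 1 := by
  refine colLen_eq_of_forall_mem_iff fun i => ?_
  rw [mem_iff_of_cells_eq_insert hins, mem_iff_lt_colLen, colLen_eq_of_cells_eq_insert hnot hins,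
    Prod.mk.injEq]
  omega

theorem rowLen_eq_of_cells_eq_insert (hins : Λ.cells = insert (r, c) μ.cells) {i : ℕ}
    (hi : i ≠ r) : Λ.rowLen i = μ.rowLen i :=
  rowLen_congr fun j => by
    rw [mem_iff_of_cells_eq_insert hins, Prod.mk.injEq]
    simp [hi]

variable {K : Type*} [Field K] {t : K}

/-- The `max` makes one formula `H i / H (i + 1)` cover both kinds of rows: for `i < b` the arm is
positive and both sides are `1`. -/
theorem hallLittlewood_column_factor (hnot : (r, c) ∉ μ) (hins : Λ.cells = insert (r, c) μ.cells)
    (ht : ∀ n ≠ 0, t ^ n ≠ 1) {i : ℕ} (hi : i < r) :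
    (1 - (0 : K) ^ arm Λ (i, c) * t ^ (leg Λ (i, c) + 1)) /
        (1 - (0 : K) ^ arm μ (i, c) * t ^ (leg μ (i, c) + 1)) =
      (1 - t ^ (r + 1 - max i (μ.colLen (c + 1)))) /
        (1 - t ^ (r + 1 - max (i + 1) (μ.colLen (c + 1)))) := by
  have hr := colLen_eq_of_cells_eq_insert hnot hins
  have harm : arm Λ (i, c) = arm μ (i, c) := by
    rw [arm, arm, rowLen_eq_of_cells_eq_insert hins hi.ne]
  have hb : μ.colLen (c + 1) ≤ r := hr ▸ μ.colLen_anti c (c + 1) c.le_succ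
  rw [harm]
  rcases lt_or_ge i (μ.colLen (c + 1)) with hib | hbi
  · have harm0 : arm μ (i, c) ≠ 0 := by rw [Ne, arm_eq_zero_iff, not_le]; exact hib
    rw [max_eq_right hib.le, max_eq_right hib, div_self (sub_ne_zero.mpr (ht _ (by omega)).symm)]
    simp only [zero_pow harm0, zero_mul, sub_zero, div_one]
  · rw [(arm_eq_zero_iff μ i c).mpr hbi, max_eq_left hbi, max_eq_left (hbi.trans i.le_succ),
      pow_zero, one_mul, one_mul, leg, leg, colLen_eq_succ_of_cells_eq_insert hnot hins, hr]
    congr 3 <;> omega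

theorem prod_hallLittlewood_column (hnot : (r, c) ∉ μ) (hins : Λ.cells = insert (r, c) μ.cells)
    (ht : ∀ n ≠ 0, t ^ n ≠ 1) :
    ∏ s ∈ μ.cells.filter (fun s => s.2 = c),
        (1 - (0 : K) ^ arm Λ s * t ^ (leg Λ s + 1)) / (1 - (0 : K) ^ arm μ s * t ^ (leg μ s + 1)) =
      (1 - t ^ (r + 1 - μ.colLen (c + 1))) / (1 - t) := by
  have hr := colLen_eq_of_cells_eq_insert hnot hins
  have hb : μ.colLen (c + 1) ≤ r := hr ▸ μ.colLen_anti c (c + 1) c.le_succ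
  set H : ℕ → K := fun i => 1 - t ^ (r + 1 - max i (μ.colLen (c + 1)))
  have hH : ∀ i ≤ r, H i ≠ 0 := fun i _ => sub_ne_zero.mpr (ht _ (by omega)).symm
  have hHr : H r = 1 - t := by simp only [H, max_eq_left hb, Nat.add_sub_cancel_left, pow_one]
  rw [cells_filter_snd_eq, hr, Finset.prod_image fun _ _ _ _ h => (Prod.mk.inj h).1, ← hHr,
    ← max_eq_right (Nat.zero_le (μ.colLen (c + 1))), ← Finset.prod_range_div_of_ne_zero H r hH]
  exact Finset.prod_congr rfl fun i hi =>
    hallLittlewood_column_factor hnot hins ht (Finset.mem_range.mp hi)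

end AddCell

end YoungDiagram

open YoungDiagram in
/-- Hall–Littlewood specialization: set the Macdonald parameter `q = 0` and
`t = 1/Q` where `Q > 1` (e.g. the size of a finite field).  Let `λ ⊂ Λ` be
partitions with the new cell added at `(r, c)` (so 1-based column `i = c + 1`,
`λ'_i = colLen c`, `λ'_{i+1} = colLen (c+1)`).  Then the multiplicity
`κ(λ,Λ) = (1/t^{Λ'_i − 1}) ∏_{s∈R} (1−q^{a_Λ+1}t^{l_Λ})/(1−q^{a_λ+1}t^{l_λ})
 ∏_{s∈C} (1−q^{a_Λ}t^{l_Λ+1})/(1−q^{a_λ}t^{l_λ+1})` evaluated at these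
parameters (with the convention `0^0 = 1`) equals
`Q^{λ'_{i+1}} + Q^{λ'_{i+1}+1} + ⋯ + Q^{λ'_i}`; in particular it is a positive
integer when `Q` is a positive integer. -/
theorem hall_littlewood_multiplicity
    (Q : ℝ) (hQ : 1 < Q) (μ Λ : YoungDiagram) (r c : ℕ)
    (hnot : (r, c) ∉ μ.cells)
    (hins : Λ.cells = insert (r, c) μ.cells) :
    (1 / (1 / Q) ^ (Λ.colLen c - 1)) *
      (∏ s ∈ μ.cells.filter (fun s => s.1 = r),
        (1 - (0 : ℝ) ^ (arm Λ s + 1) * (1 / Q) ^ leg Λ s) /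
          (1 - (0 : ℝ) ^ (arm μ s + 1) * (1 / Q) ^ leg μ s)) *
      (∏ s ∈ μ.cells.filter (fun s => s.2 = c),
        (1 - (0 : ℝ) ^ arm Λ s * (1 / Q) ^ (leg Λ s + 1)) /
          (1 - (0 : ℝ) ^ arm μ s * (1 / Q) ^ (leg μ s + 1)))
    = ∑ k ∈ Finset.Icc (μ.colLen (c + 1)) (μ.colLen c), Q ^ k ∧
    ∀ m : ℕ, 0 < m → 0 < ∑ k ∈ Finset.Icc (μ.colLen (c + 1)) (μ.colLen c), m ^ k := by
  have hcol : μ.colLen (c + 1) ≤ μ.colLen c := μ.colLen_anti c (c + 1) c.le_succ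
  refine ⟨?_, fun m hm => Finset.sum_pos (fun k _ => pow_pos hm k) (Finset.nonempty_Icc.mpr hcol)⟩
  have ht : ∀ n ≠ 0, (1 / Q) ^ n ≠ 1 := fun n hn =>
    (pow_lt_one₀ (by positivity) ((div_lt_one (by positivity)).mpr hQ) hn).ne
  have hrow : ∏ s ∈ μ.cells.filter (fun s => s.1 = r),
      (1 - (0 : ℝ) ^ (arm Λ s + 1) * (1 / Q) ^ leg Λ s) /
        (1 - (0 : ℝ) ^ (arm μ s + 1) * (1 / Q) ^ leg μ s) = 1 :=
    Finset.prod_eq_one fun s _ => by simp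
  rw [hrow, mul_one, prod_hallLittlewood_column hnot hins ht,
    colLen_eq_succ_of_cells_eq_insert hnot hins, Nat.add_sub_cancel,
    ← colLen_eq_of_cells_eq_insert hnot hins]
  exact (geom_sum_Icc_eq_div_inv_pow (by positivity) hQ.ne' hcol).symm
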